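/- Let H, L be subgroups of a group G acting on a set M, where M̄ = M₁ × G₂, M = M₁ × G₂/K₂, H̄ = H × K₂ and L̄ = L × K₂, and the actions on M̄ and M are related by the equivariant projection π(m₁,g) = (m₁, gK₂). Then H̄·m̄ = L̄·m̄ holds for every m̄ ∈ M̄ if and only if H·m = L·m holds for every m ∈ M. -/
import Mathlib

private lemma aux_smul {G₂ : Type*} [Group G₂] (K₂ : Subgroup G₂) (a g : G₂) :
    a • (QuotientGroup.mk g : G₂ ⧸ K₂) = QuotientGroup.mk (a * g) := rfl

private lemma aux_fwd {G₁ M₁ G₂ : Type*} [Group G₁] [MulAction G₁ M₁] [Group G₂]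
    (K₂ : Subgroup G₂) (H L : Subgroup (G₁ × G₂))
    (hb : ∀ m : M₁ × G₂,
        {x : M₁ × G₂ | ∃ h ∈ H, ∃ k ∈ K₂, x = (h.1 • m.1, h.2 * m.2 * k⁻¹)}
          = {x : M₁ × G₂ | ∃ l ∈ L, ∃ k ∈ K₂, x = (l.1 • m.1, l.2 * m.2 * k⁻¹)})
    (m : M₁ × G₂ ⧸ K₂) (y : M₁ × G₂ ⧸ K₂)
    (hy : ∃ h ∈ H, y = (h.1 • m.1, h.2 • m.2)) :
    ∃ l ∈ L, y = (l.1 • m.1, l.2 • m.2) := by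
  obtain ⟨m₁, gq⟩ := m
  induction gq using QuotientGroup.induction_on with
  | H g =>
    obtain ⟨h, hH, rfl⟩ := hy
    have hx : (h.1 • m₁, h.2 * g * (1 : G₂)⁻¹) ∈
        {x : M₁ × G₂ | ∃ h ∈ H, ∃ k ∈ K₂, x = (h.1 • m₁, h.2 * g * k⁻¹)} :=
      ⟨h, hH, 1, one_mem _, rfl⟩
    rw [hb (m₁, g)] at hx
    obtain ⟨l, hL, k, hk, hx⟩ := hx
    refine ⟨l, hL, ?_⟩
    have h1 : h.1 • m₁ = l.1 • m₁ := congrArg Prod.fst hx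
    have h2 : h.2 * g * (1 : G₂)⁻¹ = l.2 * g * k⁻¹ := congrArg Prod.snd hx
    have h2' : h.2 * g = l.2 * g * k⁻¹ := by simpa using h2
    simp only [aux_smul, Prod.mk.injEq]
    refine ⟨h1, ?_⟩
    rw [h2', QuotientGroup.eq]
    have hc : (l.2 * g * k⁻¹)⁻¹ * (l.2 * g) = k := by group
    rw [hc]; exact hk

private lemma aux_bwd {G₁ M₁ G₂ : Type*} [Group G₁] [MulAction G₁ M₁] [Group G₂]
    (K₂ : Subgroup G₂) (H L : Subgroup (G₁ × G₂))
    (hq : ∀ m : M₁ × G₂ ⧸ K₂,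
        {y : M₁ × G₂ ⧸ K₂ | ∃ h ∈ H, y = (h.1 • m.1, h.2 • m.2)}
          = {y : M₁ × G₂ ⧸ K₂ | ∃ l ∈ L, y = (l.1 • m.1, l.2 • m.2)})
    (m : M₁ × G₂) (x : M₁ × G₂)
    (hx : ∃ h ∈ H, ∃ k ∈ K₂, x = (h.1 • m.1, h.2 * m.2 * k⁻¹)) :
    ∃ l ∈ L, ∃ k ∈ K₂, x = (l.1 • m.1, l.2 * m.2 * k⁻¹) := by
  obtain ⟨m₁, g⟩ := m
  obtain ⟨h, hH, k, hk, rfl⟩ := hx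
  have hy : ((h.1 • m₁, (QuotientGroup.mk (h.2 * g) : G₂ ⧸ K₂)) : M₁ × G₂ ⧸ K₂) ∈
      {y : M₁ × G₂ ⧸ K₂ | ∃ h' ∈ H, y = (h'.1 • m₁, h'.2 • (QuotientGroup.mk g : G₂ ⧸ K₂))} :=
    ⟨h, hH, by simp [aux_smul]⟩
  rw [hq (m₁, (QuotientGroup.mk g : G₂ ⧸ K₂))] at hy
  obtain ⟨l, hL, hy⟩ := hy
  have h1 : h.1 • m₁ = l.1 • m₁ := congrArg Prod.fst hy
  have h2 : (QuotientGroup.mk (h.2 * g) : G₂ ⧸ K₂) = QuotientGroup.mk (l.2 * g) := by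
    have := congrArg Prod.snd hy
    simpa [aux_smul] using this
  rw [QuotientGroup.eq] at h2
  set k' : G₂ := (h.2 * g)⁻¹ * (l.2 * g) with hk'
  refine ⟨l, hL, k * k', mul_mem hk h2, ?_⟩
  simp only [Prod.mk.injEq]
  refine ⟨h1, ?_⟩
  have : l.2 * g = h.2 * g * k' := by rw [hk']; group
  rw [this]
  group

/-- With `H, L ⊆ G₁ × G₂` acting on `M = M₁ × G₂⧸K₂` and the expanded groups
`H̄ = H × K₂`, `L̄ = L × K₂` acting on `M̄ = M₁ × G₂`: the orbits of `H̄` and `L̄` on `M̄`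
coincide pointwise if and only if the orbits of `H` and `L` on `M` coincide pointwise. -/
theorem stmt17 (G₁ M₁ G₂ : Type*) [Group G₁] [MulAction G₁ M₁] [Group G₂]
    (K₂ : Subgroup G₂) (H L : Subgroup (G₁ × G₂)) :
    (∀ m : M₁ × G₂,
        {x : M₁ × G₂ | ∃ h ∈ H, ∃ k ∈ K₂, x = (h.1 • m.1, h.2 * m.2 * k⁻¹)}
          = {x : M₁ × G₂ | ∃ l ∈ L, ∃ k ∈ K₂, x = (l.1 • m.1, l.2 * m.2 * k⁻¹)}) ↔
      (∀ m : M₁ × G₂ ⧸ K₂,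
        {y : M₁ × G₂ ⧸ K₂ | ∃ h ∈ H, y = (h.1 • m.1, h.2 • m.2)}
          = {y : M₁ × G₂ ⧸ K₂ | ∃ l ∈ L, y = (l.1 • m.1, l.2 • m.2)}) := by
  constructor
  · intro hb m
    ext y
    exact ⟨aux_fwd K₂ H L hb m y, aux_fwd K₂ L H (fun m => (hb m).symm) m y⟩
  · intro hq m
    ext x
    exact ⟨aux_bwd K₂ H L hq m x, aux_bwd K₂ L H (fun m => (hq m).symm) m x⟩
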